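/- Let k be a field of characteristic 0 and M a finite-dimensional k((t))-vector space with connection ∂_t. If there exists a nonzero m ∈ M such that the k[[t]][∂_t]-submodule of M generated by m is finitely generated as a k[[t]]-module, then M has a nonzero horizontal section, i.e. ker(∂_t) ≠ 0. -/

import Mathlib

/-! A finitely generated `∂_t`-stable `k⟦t⟧`-submodule `N` of `M` is torsion-free, hence free
with a basis `b`, and `∂_t b_j = ∑ i, A i j • b i` for a matrix `A` over `k⟦t⟧`. The vector
`∑ j, y j • b j` is horizontal exactly when `y' + A y = 0`, and in characteristic zero this linear
system has a formal power series solution with any prescribed constant term: its coefficients are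
determined by `(n + 1) y_{n+1} = -∑_{p + q = n} A_p y_q`. -/

/-- The formal derivative d/dt on the field of formal Laurent series `k((t))`. -/
noncomputable def lderiv {k : Type} [Field k] (f : LaurentSeries k) : LaurentSeries k where
  coeff n := (n + 1 : ℤ) • f.coeff (n + 1)
  isPWO_support' := by
    refine Set.IsPWO.mono (f.isPWO_support.image_of_monotone
      (f := fun n : ℤ => n - 1) (fun a b h => by simpa using h)) ?_
    intro n hn
    refine ⟨n + 1, ?_, by ring⟩
    intro h
    simp only [Function.mem_support] at hn
    exact hn (by simp [h])

open PowerSeries Matrix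

theorem lderiv_coe {k : Type} [Field k] (f : k⟦X⟧) :
    lderiv (f : LaurentSeries k) = (d⁄dX k f : LaurentSeries k) := by
  ext n
  show (n + 1 : ℤ) • _ = _
  rw [coeff_coe, coeff_coe, coeff_derivative]
  rcases n with m | m
  · rw [Int.ofNat_eq_natCast, if_neg (by omega), if_neg (by omega), Int.natAbs_natCast,
      show (m : ℤ) + 1 = ((m + 1 : ℕ) : ℤ) by push_cast; rfl, Int.natAbs_natCast, natCast_zsmul,
      nsmul_eq_mul, mul_comm]
    push_cast; rfl
  · rw [if_pos (Int.negSucc_lt_zero m)]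
    rcases m with _ | m
    · simp
    · rw [if_pos (by omega), smul_zero]

theorem coeff_mulVec {R ι : Type*} [Semiring R] [Fintype ι] (A : Matrix ι ι R⟦X⟧)
    (y : ι → R⟦X⟧) (i : ι) (n : ℕ) :
    coeff n ((A *ᵥ y) i) = ∑ q : Fin (n + 1), ∑ j, coeff q (A i j) * coeff (n - q) (y j) := by
  simp only [Matrix.mulVec, dotProduct, map_sum, coeff_mul,
    Finset.Nat.sum_antidiagonal_eq_sum_range_succ_mk, Fin.sum_univ_eq_sum_range
      (fun q => ∑ j, coeff q (A i j) * coeff (n - q) (y j))]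
  exact Finset.sum_comm

section LinearODE

variable {k ι : Type*} [Field k] [Fintype ι]

noncomputable def linearODESolutionCoeff (A : Matrix ι ι k⟦X⟧) (v : ι → k) : ℕ → ι → k
  | 0 => v
  | n + 1 => fun i => -((n + 1 : k))⁻¹ *
      ∑ q : Fin (n + 1), ∑ j, coeff q (A i j) * linearODESolutionCoeff A v (n - q) j
decreasing_by omega

noncomputable def linearODESolution (A : Matrix ι ι k⟦X⟧) (v : ι → k) : ι → k⟦X⟧ :=
  fun i => mk fun n => linearODESolutionCoeff A v n i

@[simp]
theorem constantCoeff_linearODESolution (A : Matrix ι ι k⟦X⟧) (v : ι → k) (i : ι) :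
    constantCoeff (linearODESolution A v i) = v i := by
  rw [← coeff_zero_eq_constantCoeff_apply, linearODESolution, coeff_mk, linearODESolutionCoeff]

theorem derivative_linearODESolution_add_mulVec [CharZero k] (A : Matrix ι ι k⟦X⟧) (v : ι → k)
    (i : ι) : d⁄dX k (linearODESolution A v i) + (A *ᵥ linearODESolution A v) i = 0 := by
  ext n
  have hn : (n + 1 : k) ≠ 0 := Nat.cast_add_one_ne_zero n
  rw [map_add, coeff_derivative, coeff_mulVec, map_zero]
  simp only [linearODESolution, coeff_mk]
  rw [linearODESolutionCoeff]
  field_simp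
  ring

end LinearODE

section Connection

variable {R N ι : Type*} [CommRing R] [AddCommGroup N] [Module R N] [Fintype ι]

noncomputable def connectionMatrix (b : Module.Basis ι R N) (D : N → N) : Matrix ι ι R :=
  fun i j => b.repr (D (b j)) i

theorem map_sum_smul_basis (b : Module.Basis ι R N) (δ : R → R) (D : N →+ N)
    (hD : ∀ (f : R) (x : N), D (f • x) = δ f • x + f • D x) (y : ι → R) :
    D (∑ j, y j • b j) = ∑ i, (δ (y i) + (connectionMatrix b D *ᵥ y) i) • b i := by
  have hb (j : ι) : D (b j) = ∑ i, connectionMatrix b D i j • b i := (b.sum_repr _).symm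
  simp only [map_sum, hD, hb, Finset.smul_sum, smul_smul, add_smul, Finset.sum_add_distrib,
    mulVec, dotProduct, Finset.sum_smul, mul_comm (y _)]
  rw [Finset.sum_comm (γ := ι)]

end Connection

theorem exists_horizontal_ne_zero {k N : Type*} [Field k] [CharZero k] [AddCommGroup N]
    [Module k⟦X⟧ N] [Module.Free k⟦X⟧ N] [Module.Finite k⟦X⟧ N] [Nontrivial N] (D : N →+ N)
    (hD : ∀ (f : k⟦X⟧) (x : N), D (f • x) = d⁄dX k f • x + f • D x) :
    ∃ x : N, x ≠ 0 ∧ D x = 0 := by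
  classical
  let b := Module.Free.chooseBasis k⟦X⟧ N
  obtain ⟨i₀⟩ := b.index_nonempty
  let y := linearODESolution (connectionMatrix b D) (Pi.single i₀ 1)
  refine ⟨∑ j, y j • b j, fun h => ?_, ?_⟩
  · have h₀ : b.repr (∑ j, y j • b j) i₀ = y i₀ := by rw [b.repr_sum_self]
    rw [h, map_zero, Finsupp.zero_apply] at h₀
    simpa [y] using congrArg constantCoeff h₀
  · rw [map_sum_smul_basis b _ D hD]
    simp [y, derivative_linearODESolution_add_mulVec]

theorem stmt8_general (k : Type) [Field k] [CharZero k]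
    (M : Type) [AddCommGroup M] [Module (LaurentSeries k) M]
    [Module (PowerSeries k) M] [IsScalarTower (PowerSeries k) (LaurentSeries k) M]
    (del : M → M)
    (hadd : ∀ x y : M, del (x + y) = del x + del y)
    (hleib : ∀ (f : LaurentSeries k) (m : M), del (f • m) = lderiv f • m + f • del m)
    (N : Submodule (PowerSeries k) M) (hN : N ≠ ⊥) (hNfg : N.FG)
    (hstab : ∀ x ∈ N, del x ∈ N) :
    ∃ m : M, m ≠ 0 ∧ del m = 0 := by
  have := Module.IsTorsionFree.trans_faithfulSMul k⟦X⟧ (LaurentSeries k) M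
  have : Module.Finite k⟦X⟧ N := Module.Finite.iff_fg.mpr hNfg
  have : Nontrivial N := Submodule.nontrivial_iff_ne_bot.mpr hN
  let D : N →+ N :=
    { toFun x := ⟨del x, hstab x x.2⟩
      map_zero' := Subtype.ext (by simpa using hadd 0 0)
      map_add' x y := Subtype.ext (hadd x y) }
  have hD (f : k⟦X⟧) (x : N) : D (f • x) = d⁄dX k f • x + f • D x := by
    ext
    simp only [D, AddMonoidHom.coe_mk, ZeroHom.coe_mk, Submodule.coe_add, Submodule.coe_smul]
    rw [← algebraMap_smul (LaurentSeries k) f, hleib, LaurentSeries.coe_algebraMap, lderiv_coe,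
      ← LaurentSeries.coe_algebraMap, algebraMap_smul, algebraMap_smul]
  obtain ⟨x, hx, hDx⟩ := exists_horizontal_ne_zero D hD
  exact ⟨x, by simpa using hx, congrArg Subtype.val hDx⟩

/-- if a finite-dimensional k((t))-vector space M with connection ∂_t
contains a nonzero ∂_t-stable finitely generated k[[t]]-submodule, then M has a
nonzero horizontal section. -/
theorem stmt8 (k : Type) [Field k] [CharZero k]
    (M : Type) [AddCommGroup M] [Module (LaurentSeries k) M]
    [FiniteDimensional (LaurentSeries k) M]
    [Module (PowerSeries k) M] [IsScalarTower (PowerSeries k) (LaurentSeries k) M]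
    (del : M → M)
    (hadd : ∀ x y : M, del (x + y) = del x + del y)
    (hleib : ∀ (f : LaurentSeries k) (m : M), del (f • m) = lderiv f • m + f • del m)
    (N : Submodule (PowerSeries k) M) (hN : N ≠ ⊥) (hNfg : N.FG)
    (hstab : ∀ x ∈ N, del x ∈ N) :
    ∃ m : M, m ≠ 0 ∧ del m = 0 :=
  stmt8_general k M del hadd hleib N hN hNfg hstab
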